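/- Let A be a real M×N matrix such that AA* is invertible, and let γ_m(A) denote its preconditioned restricted isometry constant of order m. Let v ∈ ℝ^N with supp(v) = T″, |T″| ≤ t, and let T′ be an index set with |T′| ≤ s and T′ ∩ T″ = ∅. Then ‖[A*(AA*)⁻¹Av]_{T′}‖₂ ≤ γ_{s+t}(A) · ‖v‖₂. -/

import Mathlib

open Matrix

/-- The Euclidean (ℓ²) norm of a vector in ℝⁿ. -/
noncomputable def norm2 {n : ℕ} (x : Fin n → ℝ) : ℝ := Real.sqrt (∑ i, x i ^ 2)

/-- `x` is `s`-sparse: it has at most `s` nonzero entries. -/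
def sparse {n : ℕ} (s : ℕ) (x : Fin n → ℝ) : Prop :=
  (Finset.univ.filter fun i => x i ≠ 0).card ≤ s

/-- `restrict T x` is the vector agreeing with `x` on `T` and zero outside `T`. -/
def restrict {n : ℕ} (T : Finset (Fin n)) (x : Fin n → ℝ) : Fin n → ℝ :=
  fun i => if i ∈ T then x i else 0

/-- The preconditioned matrix `(AAᴴ)^{-1/2} A`, where `(AAᴴ)^{-1/2}` is the inverse of the
positive semidefinite square root of `AAᴴ`. -/
noncomputable def precond {M N : ℕ} (A : Matrix (Fin M) (Fin N) ℝ) :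
    Matrix (Fin M) (Fin N) ℝ :=
  ((Matrix.posSemidef_self_mul_conjTranspose A).1.eigenvectorUnitary.1 *
    diagonal ((↑) ∘ (√·) ∘ (Matrix.posSemidef_self_mul_conjTranspose A).1.eigenvalues) *
    (star (Matrix.posSemidef_self_mul_conjTranspose A).1.eigenvectorUnitary :
      Matrix (Fin M) (Fin M) ℝ) : Matrix (Fin M) (Fin M) ℝ)⁻¹ * A

/-- The preconditioned restricted isometry constant `γ_s(A)`: the smallest `γ ≥ 0` such that
`(1-γ)‖x‖₂² ≤ ‖(AAᴴ)^{-1/2}Ax‖₂²` for all `s`-sparse `x`. -/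
noncomputable def pripConst {M N : ℕ} (A : Matrix (Fin M) (Fin N) ℝ) (s : ℕ) : ℝ :=
  sInf {γ : ℝ | 0 ≤ γ ∧ ∀ x : Fin N → ℝ, sparse s x →
    (1 - γ) * norm2 x ^ 2 ≤ norm2 ((precond A).mulVec x) ^ 2}

/-- The restricted isometry constant `δ_s(B)`: the smallest `δ ≥ 0` such that
`(1-δ)‖x‖₂² ≤ ‖Bx‖₂² ≤ (1+δ)‖x‖₂²` for all `s`-sparse `x`. -/
noncomputable def ripConst {m n : ℕ} (B : Matrix (Fin m) (Fin n) ℝ) (s : ℕ) : ℝ :=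
  sInf {δ : ℝ | 0 ≤ δ ∧ ∀ x : Fin n → ℝ, sparse s x →
    (1 - δ) * norm2 x ^ 2 ≤ norm2 (B.mulVec x) ^ 2 ∧
      norm2 (B.mulVec x) ^ 2 ≤ (1 + δ) * norm2 x ^ 2}

/-- `θ_t(A) = δ_t((AAᴴ)⁻¹A)`. -/
noncomputable def thetaConst {M N : ℕ} (A : Matrix (Fin M) (Fin N) ℝ) (t : ℕ) : ℝ :=
  ripConst ((A * Aᴴ)⁻¹ * A) t

open scoped Pointwise

/-!
`P = Aᴴ (AAᴴ)⁻¹ A` is the orthogonal projection onto the row space of `A`, and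
`‖(AAᴴ)^{-1/2} A x‖² = ⟨x, P x⟩`. Hence for every admissible `γ` the complementary projection
`1 - P` satisfies `‖(1 - P) x‖² = ‖x‖² - ⟨x, P x⟩ ≤ γ ‖x‖²` on `(s+t)`-sparse `x`.
For `u = [P v]_{T'}`, disjointness of supports gives `⟨u, v⟩ = 0` and `⟨u, P v⟩ = ‖u‖²`, so
`‖u‖² = -⟨(1 - P) u, (1 - P) v⟩ ≤ ‖(1 - P) u‖ ‖(1 - P) v‖ ≤ γ ‖u‖ ‖v‖` by Cauchy–Schwarz.
-/

lemma norm2_sq {n : ℕ} (x : Fin n → ℝ) : norm2 x ^ 2 = x ⬝ᵥ x := by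
  rw [norm2, Real.sq_sqrt (Finset.sum_nonneg fun i _ => sq_nonneg _)]
  simp only [dotProduct, sq]

lemma norm2_nonneg {n : ℕ} (x : Fin n → ℝ) : 0 ≤ norm2 x := Real.sqrt_nonneg _

lemma norm2_neg {n : ℕ} (x : Fin n → ℝ) : norm2 (-x) = norm2 x := by
  simp [norm2]

lemma dotProduct_le_norm2_mul_norm2 {n : ℕ} (x y : Fin n → ℝ) :
    x ⬝ᵥ y ≤ norm2 x * norm2 y :=
  Real.sum_mul_le_sqrt_mul_sqrt _ x y

lemma sparse_of_support_subset {n s : ℕ} {x : Fin n → ℝ} {T : Finset (Fin n)}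
    (hx : ∀ i, x i ≠ 0 → i ∈ T) (hT : T.card ≤ s) : sparse s x :=
  (Finset.card_le_card fun i hi => hx i (Finset.mem_filter.mp hi).2).trans hT

lemma sparse_restrict {n s : ℕ} {T : Finset (Fin n)} (hT : T.card ≤ s) (x : Fin n → ℝ) :
    sparse s (restrict T x) :=
  sparse_of_support_subset (fun i hi => by by_contra h; simp [restrict, h] at hi) hT

lemma restrict_dotProduct_self {n : ℕ} (T : Finset (Fin n)) (x : Fin n → ℝ) :
    restrict T x ⬝ᵥ x = restrict T x ⬝ᵥ restrict T x :=
  Finset.sum_congr rfl fun i _ => by by_cases h : i ∈ T <;> simp [restrict, h]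

lemma restrict_dotProduct_eq_zero {n : ℕ} {T : Finset (Fin n)} {y : Fin n → ℝ}
    (hy : ∀ i ∈ T, y i = 0) (x : Fin n → ℝ) : restrict T x ⬝ᵥ y = 0 :=
  Finset.sum_eq_zero fun i _ => by by_cases h : i ∈ T <;> simp [restrict, h, hy]

lemma dotProduct_mulVec_eq_mulVec_dotProduct_mulVec {ι : Type*} [Fintype ι]
    {Q : Matrix ι ι ℝ} (hQ : Q.IsHermitian)
    (hQQ : IsIdempotentElem Q) (x y : ι → ℝ) :
    x ⬝ᵥ (Q *ᵥ y) = (Q *ᵥ x) ⬝ᵥ (Q *ᵥ y) := by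
  have hQt : Qᵀ = Q := by rw [← conjTranspose_eq_transpose_of_trivial, hQ.eq]
  calc x ⬝ᵥ (Q *ᵥ y) = x ⬝ᵥ (Q *ᵥ (Q *ᵥ y)) := by rw [mulVec_mulVec, hQQ.eq]
    _ = (x ᵥ* Q) ⬝ᵥ (Q *ᵥ y) := dotProduct_mulVec _ _ _
    _ = (Q *ᵥ x) ⬝ᵥ (Q *ᵥ y) := by rw [← mulVec_transpose, hQt]

section GramProjection

variable {α : Type*} [CommRing α] [StarRing α] {m n : Type*} [Fintype m] [DecidableEq m]
  [Fintype n] (A : Matrix m n α)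

lemma isHermitian_conjTranspose_mul_inv_mul : (Aᴴ * (A * Aᴴ)⁻¹ * A).IsHermitian := by
  simp only [IsHermitian, conjTranspose_mul, conjTranspose_nonsing_inv,
    conjTranspose_conjTranspose, Matrix.mul_assoc]

lemma isIdempotentElem_conjTranspose_mul_inv_mul (hA : IsUnit (A * Aᴴ).det) :
    IsIdempotentElem (Aᴴ * (A * Aᴴ)⁻¹ * A) := by
  calc Aᴴ * (A * Aᴴ)⁻¹ * A * (Aᴴ * (A * Aᴴ)⁻¹ * A)
      = Aᴴ * ((A * Aᴴ)⁻¹ * (A * Aᴴ)) * (A * Aᴴ)⁻¹ * A := by simp only [Matrix.mul_assoc]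
    _ = Aᴴ * (A * Aᴴ)⁻¹ * A := by rw [nonsing_inv_mul _ hA, Matrix.mul_one]

end GramProjection

section EigenSqrt

variable {n : Type*} [Fintype n] [DecidableEq n] {S : Matrix n n ℝ}

noncomputable def eigenSqrt (hS : S.IsHermitian) : Matrix n n ℝ :=
  hS.eigenvectorUnitary.1 * diagonal (fun i => √(hS.eigenvalues i)) *
    (star hS.eigenvectorUnitary : Matrix n n ℝ)

lemma isHermitian_eigenSqrt (hS : S.IsHermitian) : (eigenSqrt hS).IsHermitian := by
  simp only [IsHermitian, eigenSqrt, conjTranspose_mul, star_eq_conjTranspose,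
    conjTranspose_conjTranspose, diagonal_conjTranspose, star_trivial, Matrix.mul_assoc]

lemma eigenSqrt_mul_self (hS : S.PosSemidef) : eigenSqrt hS.1 * eigenSqrt hS.1 = S := by
  set U : Matrix n n ℝ := hS.1.eigenvectorUnitary.1
  set D : Matrix n n ℝ := diagonal (fun i => √(hS.1.eigenvalues i))
  have hUU : star U * U = 1 := Unitary.star_mul_self_of_mem hS.1.eigenvectorUnitary.2
  have hDD : D * D = diagonal (RCLike.ofReal ∘ hS.1.eigenvalues) := by
    rw [diagonal_mul_diagonal]
    congr 1
    funext i
    exact Real.mul_self_sqrt (hS.eigenvalues_nonneg i)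
  have hspec := hS.1.spectral_theorem
  rw [Unitary.conjStarAlgAut_apply] at hspec
  calc eigenSqrt hS.1 * eigenSqrt hS.1 = U * (D * (star U * U) * D) * star U := by
        simp only [eigenSqrt, U, D, Matrix.mul_assoc]
    _ = S := by rw [hUU, Matrix.mul_one, hDD, ← hspec]

end EigenSqrt

lemma conjTranspose_inv_mul_mul_inv_mul {α : Type*} [CommRing α] [StarRing α]
    {m n : Type*} [Fintype m] [DecidableEq m] {R : Matrix m m α} (hR : R.IsHermitian)
    (A : Matrix m n α) : (R⁻¹ * A)ᴴ * (R⁻¹ * A) = Aᴴ * (R * R)⁻¹ * A := by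
  rw [conjTranspose_mul, conjTranspose_nonsing_inv, hR.eq, Matrix.mul_inv_rev]
  simp only [Matrix.mul_assoc]

lemma precond_eq_inv_eigenSqrt_mul {M N : ℕ} (A : Matrix (Fin M) (Fin N) ℝ) :
    precond A = (eigenSqrt (posSemidef_self_mul_conjTranspose A).1)⁻¹ * A := rfl

lemma conjTranspose_precond_mul_precond {M N : ℕ} (A : Matrix (Fin M) (Fin N) ℝ) :
    (precond A)ᴴ * precond A = Aᴴ * (A * Aᴴ)⁻¹ * A := by
  rw [precond_eq_inv_eigenSqrt_mul, conjTranspose_inv_mul_mul_inv_mul (isHermitian_eigenSqrt _),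
    eigenSqrt_mul_self (posSemidef_self_mul_conjTranspose A)]

lemma norm2_precond_mulVec_sq {M N : ℕ} (A : Matrix (Fin M) (Fin N) ℝ) (x : Fin N → ℝ) :
    norm2 (precond A *ᵥ x) ^ 2 = x ⬝ᵥ ((Aᴴ * (A * Aᴴ)⁻¹ * A) *ᵥ x) := by
  rw [norm2_sq, ← conjTranspose_precond_mul_precond, ← mulVec_mulVec, dotProduct_mulVec x,
    vecMul_conjTranspose, star_trivial, star_trivial]

def pripAdmissible {M N : ℕ} (A : Matrix (Fin M) (Fin N) ℝ) (s : ℕ) : Set ℝ :=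
  {γ : ℝ | 0 ≤ γ ∧ ∀ x : Fin N → ℝ, sparse s x →
    (1 - γ) * norm2 x ^ 2 ≤ norm2 ((precond A).mulVec x) ^ 2}

lemma pripConst_eq_sInf {M N : ℕ} (A : Matrix (Fin M) (Fin N) ℝ) (s : ℕ) :
    pripConst A s = sInf (pripAdmissible A s) := rfl

lemma one_mem_pripAdmissible {M N : ℕ} (A : Matrix (Fin M) (Fin N) ℝ) (s : ℕ) :
    1 ∈ pripAdmissible A s :=
  ⟨zero_le_one, fun x _ => by rw [sub_self, zero_mul]; positivity⟩

section Complement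

variable {M N : ℕ} {A : Matrix (Fin M) (Fin N) ℝ} {s : ℕ} {γ : ℝ}

local notation "P" => Aᴴ * (A * Aᴴ)⁻¹ * A

lemma one_sub_mulVec_dotProduct_one_sub_mulVec (hA : IsUnit (A * Aᴴ).det) (x y : Fin N → ℝ) :
    ((1 - P) *ᵥ x) ⬝ᵥ ((1 - P) *ᵥ y) = x ⬝ᵥ y - x ⬝ᵥ (P *ᵥ y) := by
  rw [← dotProduct_mulVec_eq_mulVec_dotProduct_mulVec
    (isHermitian_one.sub (isHermitian_conjTranspose_mul_inv_mul A))
    (isIdempotentElem_conjTranspose_mul_inv_mul A hA).one_sub, sub_mulVec, one_mulVec,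
    dotProduct_sub]

lemma norm2_one_sub_mulVec_le (hA : IsUnit (A * Aᴴ).det) (hγ : γ ∈ pripAdmissible A s)
    {x : Fin N → ℝ} (hx : sparse s x) : norm2 ((1 - P) *ᵥ x) ≤ √γ * norm2 x := by
  have hsq : norm2 ((1 - P) *ᵥ x) ^ 2 ≤ γ * norm2 x ^ 2 := by
    rw [norm2_sq, one_sub_mulVec_dotProduct_one_sub_mulVec hA, ← norm2_sq,
      ← norm2_precond_mulVec_sq]
    linarith [hγ.2 x hx]
  rw [← Real.sqrt_sq (norm2_nonneg _), ← Real.sqrt_sq (norm2_nonneg x), ← Real.sqrt_mul hγ.1]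
  exact Real.sqrt_le_sqrt hsq

lemma norm2_restrict_mulVec_le (hA : IsUnit (A * Aᴴ).det) (hγ : γ ∈ pripAdmissible A s)
    {T : Finset (Fin N)} (hT : T.card ≤ s) {v : Fin N → ℝ} (hv : sparse s v)
    (hvT : ∀ i ∈ T, v i = 0) : norm2 (restrict T (P *ᵥ v)) ≤ γ * norm2 v := by
  set u := restrict T (P *ᵥ v)
  have hu : norm2 u ^ 2 = (-((1 - P) *ᵥ u)) ⬝ᵥ ((1 - P) *ᵥ v) := by
    rw [neg_dotProduct, one_sub_mulVec_dotProduct_one_sub_mulVec hA,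
      restrict_dotProduct_eq_zero hvT, restrict_dotProduct_self, norm2_sq, zero_sub, neg_neg]
  have hγu := norm2_one_sub_mulVec_le hA hγ (sparse_restrict hT (P *ᵥ v))
  have hγv := norm2_one_sub_mulVec_le hA hγ hv
  have key : norm2 u ^ 2 ≤ γ * norm2 u * norm2 v :=
    calc norm2 u ^ 2 ≤ norm2 ((1 - P) *ᵥ u) * norm2 ((1 - P) *ᵥ v) := by
          rw [hu, ← norm2_neg ((1 - P) *ᵥ u)]
          exact dotProduct_le_norm2_mul_norm2 _ _
      _ ≤ (√γ * norm2 u) * (√γ * norm2 v) :=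
          mul_le_mul hγu hγv (norm2_nonneg _) (mul_nonneg (Real.sqrt_nonneg γ) (norm2_nonneg u))
      _ = γ * norm2 u * norm2 v := by
          rw [mul_mul_mul_comm, Real.mul_self_sqrt hγ.1, mul_assoc]
  by_contra! hlt
  have hu_pos : 0 < norm2 u := (mul_nonneg hγ.1 (norm2_nonneg v)).trans_lt hlt
  nlinarith [mul_lt_mul_of_pos_left hlt hu_pos]

end Complement

lemma le_sInf_mul {S : Set ℝ} (hS : S.Nonempty) {x y : ℝ} (hy : 0 ≤ y)
    (h : ∀ γ ∈ S, x ≤ γ * y) : x ≤ sInf S * y := by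
  rw [mul_comm, ← smul_eq_mul, ← Real.sInf_smul_of_nonneg hy]
  refine le_csInf hS.smul_set ?_
  rintro _ ⟨γ, hγ, rfl⟩
  exact (h γ hγ).trans_eq (mul_comm γ y)

theorem stmt3 {M N : ℕ} (A : Matrix (Fin M) (Fin N) ℝ) (hA : IsUnit (A * Aᴴ).det)
    (s t : ℕ) (v : Fin N → ℝ) (T' T'' : Finset (Fin N))
    (hv : ∀ i, v i ≠ 0 ↔ i ∈ T'')
    (hT' : T'.card ≤ s) (hT'' : T''.card ≤ t) (hdisj : Disjoint T' T'') :
    norm2 (restrict T' ((Aᴴ * (A * Aᴴ)⁻¹ * A).mulVec v)) ≤ pripConst A (s + t) * norm2 v := by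
  have hv_sparse : sparse (s + t) v :=
    sparse_of_support_subset (fun i hi => (hv i).1 hi) (hT''.trans (Nat.le_add_left t s))
  have hvT' : ∀ i ∈ T', v i = 0 := fun i hi => by
    by_contra h
    exact Finset.disjoint_left.mp hdisj hi ((hv i).1 h)
  rw [pripConst_eq_sInf]
  exact le_sInf_mul ⟨1, one_mem_pripAdmissible A _⟩ (norm2_nonneg v) fun γ hγ =>
    norm2_restrict_mulVec_le hA hγ (hT'.trans (Nat.le_add_right s t)) hv_sparse hvT'
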